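/- arXiv:2003.10113 — 3 statements merged into one kernel-verified Lean document; each statement's English description precedes it below -/
import Mathlib

section
/- Bias bound for the discounted estimator: if ‖A_s‖₂ ≤ L, ‖θ*_s‖₂ ≤ S for all s, μ is k_μ-Lipschitz, 0 < γ < 1, D ∈ ℕ, θ*_s = θ*_t for all t - D < s ≤ t, and Ṽ_{t-1} ⪰ (λ γ^{-2(t-1)}/c_μ) I_d, then ‖Σ_{s=1}^{t-D-1} γ^{-s}(μ(A_s^⊤ θ*_t) - μ(A_s^⊤ θ*_s)) A_s‖_{Ṽ_{t-1}^{-1}} ≤ 2 L² S k_μ √(c_μ/λ) · γ^D/(1-γ). -/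
open Real Matrix

lemma dotSelf_nonneg {d : ℕ} (v : Fin d → ℝ) : 0 ≤ v ⬝ᵥ v :=
  Finset.sum_nonneg fun i _ => mul_self_nonneg _

lemma abs_dot_le {d : ℕ} (v w : Fin d → ℝ) :
    |v ⬝ᵥ w| ≤ Real.sqrt (v ⬝ᵥ v) * Real.sqrt (w ⬝ᵥ w) := by
  rw [← Real.sqrt_mul (dotSelf_nonneg v), ← Real.sqrt_sq_eq_abs]
  apply Real.sqrt_le_sqrt
  simpa [dotProduct, sq] using Finset.sum_mul_sq_le_sq_mul_sq Finset.univ v w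

lemma sqrt_dot_eq_norm {d : ℕ} (v : Fin d → ℝ) :
    Real.sqrt (v ⬝ᵥ v) = ‖(WithLp.equiv 2 (Fin d → ℝ)).symm v‖ := by
  rw [EuclideanSpace.norm_eq]
  congr 1
  simp [dotProduct, Real.norm_eq_abs, sq_abs, sq]

lemma sqrt_dot_sum_le {d : ℕ} (F : Finset ℕ) (v : ℕ → Fin d → ℝ) :
    Real.sqrt ((∑ s ∈ F, v s) ⬝ᵥ (∑ s ∈ F, v s)) ≤ ∑ s ∈ F, Real.sqrt (v s ⬝ᵥ v s) := by
  simp only [sqrt_dot_eq_norm]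
  rw [show (WithLp.equiv 2 (Fin d → ℝ)).symm (∑ s ∈ F, v s)
      = ∑ s ∈ F, (WithLp.equiv 2 (Fin d → ℝ)).symm (v s) from
    map_sum (WithLp.linearEquiv 2 ℝ (Fin d → ℝ)).symm v F]
  exact norm_sum_le _ _

lemma sqrt_dot_smul {d : ℕ} (c : ℝ) (v : Fin d → ℝ) :
    Real.sqrt ((c • v) ⬝ᵥ (c • v)) = |c| * Real.sqrt (v ⬝ᵥ v) := by
  rw [sqrt_dot_eq_norm, sqrt_dot_eq_norm]
  rw [show (WithLp.equiv 2 (Fin d → ℝ)).symm (c • v)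
      = c • (WithLp.equiv 2 (Fin d → ℝ)).symm v from rfl]
  rw [norm_smul, Real.norm_eq_abs]

lemma sum_mulVec' {d : ℕ} (F : Finset ℕ) (M : ℕ → Matrix (Fin d) (Fin d) ℝ) (w : Fin d → ℝ) :
    (∑ s ∈ F, M s) *ᵥ w = ∑ s ∈ F, (M s) *ᵥ w := by
  ext i
  rw [Finset.sum_apply]
  simp only [Matrix.mulVec, dotProduct, Matrix.sum_apply, Finset.sum_mul]
  exact Finset.sum_comm

lemma dot_sum' {d : ℕ} (F : Finset ℕ) (v : ℕ → Fin d → ℝ) (w : Fin d → ℝ) :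
    w ⬝ᵥ (∑ s ∈ F, v s) = ∑ s ∈ F, w ⬝ᵥ v s := by
  simp only [dotProduct, Finset.sum_apply, Finset.mul_sum]
  exact Finset.sum_comm

lemma vecMulVec_mulVec' {d : ℕ} (a w : Fin d → ℝ) :
    (vecMulVec a a) *ᵥ w = (a ⬝ᵥ w) • a := by
  ext i
  simp only [vecMulVec, mulVec, dotProduct, Matrix.of_apply, Pi.smul_apply, smul_eq_mul,
    Finset.sum_mul, Finset.mul_sum]
  exact Finset.sum_congr rfl fun j _ => by ring

lemma geom_aux {γ : ℝ} (hγ : 0 < γ) (hγ1 : γ < 1) (m : ℕ) :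
    ∑ s ∈ Finset.Icc 1 m, (γ ^ s)⁻¹ ≤ (γ ^ m)⁻¹ / (1 - γ) := by
  induction m with
  | zero =>
    have h1γ : 0 < 1 - γ := by linarith
    simp only [show Finset.Icc 1 0 = (∅ : Finset ℕ) by rfl, Finset.sum_empty, pow_zero, inv_one]
    positivity
  | succ m ih =>
    rw [Finset.sum_Icc_succ_top (Nat.one_le_iff_ne_zero.mpr (Nat.succ_ne_zero m))]
    have h1γ : 0 < 1 - γ := by linarith
    have hγm : 0 < γ ^ m := pow_pos hγ m
    have key : (γ ^ m)⁻¹ / (1 - γ) + (γ ^ (m+1))⁻¹ = (γ ^ (m+1))⁻¹ / (1 - γ) := by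
      field_simp
      ring
    linarith [ih]

/-- Bias bound for the discounted estimator. -/
theorem discounted_bias_bound
    (d : ℕ) (A : ℕ → (Fin d → ℝ)) (θstar : ℕ → (Fin d → ℝ))
    (μl : ℝ → ℝ) (kμ L S lam cμ γ : ℝ)
    (hkμ : 0 ≤ kμ) (hL : 0 ≤ L) (hS : 0 ≤ S) (hlam : 0 < lam) (hcμ : 0 < cμ)
    (hγ : 0 < γ) (hγ1 : γ < 1)
    (hlip : ∀ x y : ℝ, |μl x - μl y| ≤ kμ * |x - y|)
    (hA : ∀ s, Real.sqrt (A s ⬝ᵥ A s) ≤ L)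
    (hθ : ∀ s, Real.sqrt (θstar s ⬝ᵥ θstar s) ≤ S)
    (t D : ℕ) (hD : 1 ≤ D) (hDt : D < t)
    (hstat : ∀ s : ℕ, t - D < s → s ≤ t → θstar s = θstar t)
    (Vt : Matrix (Fin d) (Fin d) ℝ)
    (hVt : Vt = (∑ s ∈ Finset.Icc 1 (t - 1), (γ ^ (2 * s))⁻¹ • vecMulVec (A s) (A s))
      + (lam * (γ ^ (2 * (t - 1)))⁻¹ / cμ) • (1 : Matrix (Fin d) (Fin d) ℝ)) :
    Real.sqrt
      ((∑ s ∈ Finset.Icc 1 (t - D - 1),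
          ((γ ^ s)⁻¹ * (μl (A s ⬝ᵥ θstar t) - μl (A s ⬝ᵥ θstar s))) • A s) ⬝ᵥ
        Vt⁻¹.mulVec
          (∑ s ∈ Finset.Icc 1 (t - D - 1),
            ((γ ^ s)⁻¹ * (μl (A s ⬝ᵥ θstar t) - μl (A s ⬝ᵥ θstar s))) • A s))
      ≤ 2 * L ^ 2 * S * kμ * Real.sqrt (cμ / lam) * γ ^ D / (1 - γ) := by
  have h1γ : 0 < 1 - γ := by linarith
  set m := t - D - 1 with hm
  set c : ℕ → ℝ := fun s => (γ ^ s)⁻¹ * (μl (A s ⬝ᵥ θstar t) - μl (A s ⬝ᵥ θstar s)) with hc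
  set x : Fin d → ℝ := ∑ s ∈ Finset.Icc 1 m, c s • A s with hx
  set α : ℝ := lam * (γ ^ (2 * (t - 1)))⁻¹ / cμ with hα
  have hα0 : 0 < α := by rw [hα]; positivity
  -- quadratic form lower bound
  have hquad : ∀ w : Fin d → ℝ, α * (w ⬝ᵥ w) ≤ w ⬝ᵥ (Vt *ᵥ w) := by
    intro w
    rw [hVt, Matrix.add_mulVec, sum_mulVec', Matrix.smul_mulVec, Matrix.one_mulVec,
      dotProduct_add, dot_sum', dotProduct_smul, smul_eq_mul]
    have h1 : 0 ≤ ∑ s ∈ Finset.Icc 1 (t - 1), w ⬝ᵥ ((γ ^ (2*s))⁻¹ • vecMulVec (A s) (A s)) *ᵥ w := by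
      apply Finset.sum_nonneg
      intro s _
      rw [Matrix.smul_mulVec, dotProduct_smul, vecMulVec_mulVec', dotProduct_smul,
        smul_eq_mul, smul_eq_mul, dotProduct_comm w (A s)]
      have := mul_self_nonneg (A s ⬝ᵥ w)
      positivity
    linarith
  -- Vt is invertible
  have hdet : IsUnit Vt.det := by
    rw [isUnit_iff_ne_zero]
    intro h0
    obtain ⟨v, hvne, hv0⟩ := Matrix.exists_mulVec_eq_zero_iff.mpr h0
    have h2 := hquad v
    rw [hv0, dotProduct_zero] at h2
    have hvv : 0 < v ⬝ᵥ v :=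
      lt_of_le_of_ne (dotSelf_nonneg v)
        (Ne.symm fun h => hvne (dotProduct_self_eq_zero.mp h))
    nlinarith
  have hVV : Vt * Vt⁻¹ = 1 := Matrix.mul_nonsing_inv _ hdet
  set w : Fin d → ℝ := Vt⁻¹ *ᵥ x with hw
  have hxw : Vt *ᵥ w = x := by
    rw [hw, Matrix.mulVec_mulVec, hVV, Matrix.one_mulVec]
  set nx : ℝ := Real.sqrt (x ⬝ᵥ x) with hnx
  set nw : ℝ := Real.sqrt (w ⬝ᵥ w) with hnw
  have hnx0 : 0 ≤ nx := Real.sqrt_nonneg _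
  have hnw0 : 0 ≤ nw := Real.sqrt_nonneg _
  have hQcs : x ⬝ᵥ w ≤ nx * nw := le_trans (le_abs_self _) (abs_dot_le x w)
  have hαw : α * (w ⬝ᵥ w) ≤ x ⬝ᵥ w := by
    have := hquad w
    rwa [hxw, dotProduct_comm w x] at this
  have hQ0 : 0 ≤ x ⬝ᵥ w := le_trans (mul_nonneg hα0.le (dotSelf_nonneg w)) hαw
  -- Q ≤ α⁻¹ * nx ^ 2
  have hQle : x ⬝ᵥ w ≤ α⁻¹ * nx ^ 2 := by
    rcases eq_or_ne w 0 with h | h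
    · rw [h, dotProduct_zero]
      positivity
    · have hww : 0 < w ⬝ᵥ w :=
        lt_of_le_of_ne (dotSelf_nonneg w) (Ne.symm fun hz => h (dotProduct_self_eq_zero.mp hz))
      have hnwpos : 0 < nw := Real.sqrt_pos.mpr hww
      have hsq : nw ^ 2 = w ⬝ᵥ w := Real.sq_sqrt (dotSelf_nonneg w)
      have hαnw : α * nw ≤ nx := by nlinarith [hαw.trans hQcs]
      have hcan : α * α⁻¹ = 1 := mul_inv_cancel₀ (ne_of_gt hα0)
      nlinarith [mul_le_mul_of_nonneg_left hαnw hnx0, inv_pos.mpr hα0]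
  -- sqrt of α⁻¹
  have ht1 : t - 1 = D + m := by omega
  have hsa : Real.sqrt α⁻¹ = Real.sqrt (cμ / lam) * γ ^ (t - 1) := by
    have hinv : α⁻¹ = (cμ / lam) * (γ ^ (t - 1)) ^ 2 := by
      rw [hα, show 2 * (t - 1) = (t - 1) * 2 from mul_comm _ _, pow_mul]
      have hγt : (γ ^ (t - 1)) ^ 2 ≠ 0 := by positivity
      field_simp
    rw [hinv, Real.sqrt_mul (by positivity), Real.sqrt_sq (by positivity)]
  -- norm bound on x
  have hxb : nx ≤ (2 * L ^ 2 * S * kμ) * ∑ s ∈ Finset.Icc 1 m, (γ ^ s)⁻¹ := by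
    calc nx ≤ ∑ s ∈ Finset.Icc 1 m, Real.sqrt ((c s • A s) ⬝ᵥ (c s • A s)) :=
          sqrt_dot_sum_le _ _
      _ ≤ ∑ s ∈ Finset.Icc 1 m, (2 * L ^ 2 * S * kμ) * (γ ^ s)⁻¹ := by
          apply Finset.sum_le_sum
          intro s _
          rw [sqrt_dot_smul]
          have hdot1 : |A s ⬝ᵥ θstar t| ≤ L * S :=
            le_trans (abs_dot_le _ _)
              (mul_le_mul (hA s) (hθ t) (Real.sqrt_nonneg _) hL)
          have hdot2 : |A s ⬝ᵥ θstar s| ≤ L * S :=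
            le_trans (abs_dot_le _ _)
              (mul_le_mul (hA s) (hθ s) (Real.sqrt_nonneg _) hL)
          have hμ : |μl (A s ⬝ᵥ θstar t) - μl (A s ⬝ᵥ θstar s)| ≤ kμ * (2 * (L * S)) := by
            refine le_trans (hlip _ _) (mul_le_mul_of_nonneg_left ?_ hkμ)
            calc |A s ⬝ᵥ θstar t - A s ⬝ᵥ θstar s|
                ≤ |A s ⬝ᵥ θstar t| + |A s ⬝ᵥ θstar s| := abs_sub _ _
              _ ≤ 2 * (L * S) := by linarith
          have hcabs : |c s| ≤ (γ ^ s)⁻¹ * (kμ * (2 * (L * S))) := by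
            rw [hc]
            simp only []
            rw [abs_mul, abs_of_pos (by positivity : (0:ℝ) < (γ ^ s)⁻¹)]
            exact mul_le_mul_of_nonneg_left hμ (by positivity)
          calc |c s| * Real.sqrt (A s ⬝ᵥ A s)
              ≤ ((γ ^ s)⁻¹ * (kμ * (2 * (L * S)))) * L := by
                apply mul_le_mul hcabs (hA s) (Real.sqrt_nonneg _)
                positivity
            _ = (2 * L ^ 2 * S * kμ) * (γ ^ s)⁻¹ := by ring
      _ = (2 * L ^ 2 * S * kμ) * ∑ s ∈ Finset.Icc 1 m, (γ ^ s)⁻¹ := by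
          rw [Finset.mul_sum]
  -- geometric sum bound
  have hgeo := geom_aux hγ hγ1 m
  have hsum0 : 0 ≤ ∑ s ∈ Finset.Icc 1 m, (γ ^ s)⁻¹ :=
    Finset.sum_nonneg fun s _ => by positivity
  have hC0 : (0:ℝ) ≤ 2 * L ^ 2 * S * kμ := by positivity
  -- put it together
  have step1 : Real.sqrt (x ⬝ᵥ w) ≤ Real.sqrt α⁻¹ * nx := by
    calc Real.sqrt (x ⬝ᵥ w) ≤ Real.sqrt (α⁻¹ * nx ^ 2) := Real.sqrt_le_sqrt hQle
      _ = Real.sqrt α⁻¹ * nx := by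
          rw [Real.sqrt_mul (by positivity), Real.sqrt_sq hnx0]
  have hγm0 : (0:ℝ) < γ ^ m := by positivity
  calc Real.sqrt (x ⬝ᵥ Vt⁻¹ *ᵥ x) = Real.sqrt (x ⬝ᵥ w) := rfl
    _ ≤ Real.sqrt α⁻¹ * nx := step1
    _ ≤ Real.sqrt α⁻¹ * ((2 * L ^ 2 * S * kμ) * ((γ ^ m)⁻¹ / (1 - γ))) := by
        apply mul_le_mul_of_nonneg_left _ (Real.sqrt_nonneg _)
        exact le_trans hxb (mul_le_mul_of_nonneg_left hgeo hC0)
    _ = 2 * L ^ 2 * S * kμ * Real.sqrt (cμ / lam) * γ ^ D / (1 - γ) := by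
        rw [hsa, ht1, pow_add]
        field_simp
end

section
/- Elliptical potential lemma (discounted version): for actions A_1,…,A_T ∈ ℝ^d with ‖A_t‖₂ ≤ L, and W_{t} = Σ_{s=1}^{t} γ^{t-s} A_s A_s^⊤ + (λ/c_μ) I_d with 0 < γ < 1, λ, c_μ > 0, it holds that Σ_{t=1}^T min{1, ‖A_t‖²_{W_{t-1}^{-1}}} ≤ 2d [ T log(1/γ) + log(1 + c_μ L²/(d λ (1-γ))) ]. -/
/-!
With `c = λ / c_μ` and `G_u` the discounted design matrix, `G_{k+1} = γ G_k + a aᵀ + c (1 - γ) I`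
for `a = A_{k+1}`. Dropping the multiple of the identity and applying the matrix determinant lemma
to `γ G_k + a aᵀ` gives `det G_{k+1} ≥ γ^d det G_k (1 + ‖a‖²_{G_k⁻¹} / γ)`; with
`min 1 y ≤ 2 log (1 + y)` each summand is at most `2 (log det G_{k+1} - log det G_k + d log γ⁻¹)`.
The sum telescopes, `log det G_0 = d log c`, and AM-GM on the eigenvalues bounds `log det G_T` by
`d log (tr G_T / d)`, where `tr G_T ≤ L² / (1 - γ) + c d` follows from the recursion.
-/

open Real Matrix

theorem Real.min_one_le_two_mul_log_one_add {y : ℝ} (hy : 0 ≤ y) :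
    min 1 y ≤ 2 * log (1 + y) := by
  have hpos : 0 < 1 + y := by linarith
  have hmin : min 1 y * (1 + y) ≤ 2 * y := by
    rcases min_cases 1 y with ⟨h, _⟩ | ⟨h, _⟩ <;> rw [h] <;> nlinarith
  calc min 1 y ≤ 2 * (1 - (1 + y)⁻¹) := by
        have h2 : 2 * (1 - (1 + y)⁻¹) = 2 * y / (1 + y) := by field_simp; ring
        rw [h2, le_div_iff₀ hpos]
        exact hmin
    _ ≤ 2 * log (1 + y) := by linarith [one_sub_inv_le_log_of_pos hpos]

namespace Matrix

variable {n : Type*} [Fintype n]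

theorem posSemidef_vecMulVec_self (v : n → ℝ) : (vecMulVec v v).PosSemidef :=
  posSemidef_vecMulVec_self_star v

variable [DecidableEq n]

theorem det_add_vecMulVec {M : Matrix n n ℝ} (hM : IsUnit M.det) (u v : n → ℝ) :
    det (M + vecMulVec u v) = det M * (1 + v ⬝ᵥ M⁻¹ *ᵥ u) := by
  rw [vecMulVec_eq Unit, det_add_replicateCol_mul_replicateRow hM,
    det_unique (1 + _ : Matrix Unit Unit ℝ)]
  simp only [Matrix.add_apply, one_apply_eq, Matrix.mul_apply, replicateRow_apply,
    replicateCol_apply, dotProduct_mulVec]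
  rfl

theorem IsHermitian.det_add_smul_one {A : Matrix n n ℝ} (hA : A.IsHermitian) (t : ℝ) :
    det (A + t • 1) = ∏ i, (hA.eigenvalues i + t) := by
  have h := congr_arg (Polynomial.eval (-t)) hA.charpoly_eq
  have hneg : scalar n (-t) - A = -(A + t • 1) := by
    rw [scalar_apply, ← smul_one_eq_diagonal]
    module
  simp only [eval_charpoly, Polynomial.eval_prod, hneg, det_neg, Polynomial.eval_sub,
    Polynomial.eval_X, Polynomial.eval_C, RCLike.ofReal_real_eq_id, id] at h
  have hflip : ∏ i, (-t - hA.eigenvalues i)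
      = (-1) ^ Fintype.card n * ∏ i, (hA.eigenvalues i + t) := by
    rw [← Finset.card_univ, ← Finset.prod_neg]
    exact Finset.prod_congr rfl fun i _ => by ring
  rw [hflip] at h
  exact mul_left_cancel₀ (pow_ne_zero _ (by norm_num)) h

theorem PosSemidef.det_le_det_add_smul_one {A : Matrix n n ℝ} (hA : A.PosSemidef) {t : ℝ}
    (ht : 0 ≤ t) : det A ≤ det (A + t • 1) := by
  rw [hA.1.det_eq_prod_eigenvalues, hA.1.det_add_smul_one]
  exact Finset.prod_le_prod (fun i _ => hA.eigenvalues_nonneg i)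
    (fun i _ => le_add_of_nonneg_right ht)

theorem PosDef.log_det_le [Nonempty n] {A : Matrix n n ℝ} (hA : A.PosDef) :
    log (det A) ≤ Fintype.card n * log (trace A / Fintype.card n) := by
  have hcard : (0 : ℝ) < Fintype.card n := by exact_mod_cast Fintype.card_pos
  have hjensen := strictConcaveOn_log_Ioi.concaveOn.le_map_sum (t := Finset.univ)
    (w := fun _ => (Fintype.card n : ℝ)⁻¹) (p := hA.1.eigenvalues)
    (fun _ _ => by positivity) (by simp [hcard.ne']) (fun i _ => hA.eigenvalues_pos i)
  simp only [smul_eq_mul, ← Finset.mul_sum] at hjensen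
  simp only [hA.1.det_eq_prod_eigenvalues, hA.1.trace_eq_sum_eigenvalues,
    RCLike.ofReal_real_eq_id, id]
  rw [log_prod fun i _ => (hA.eigenvalues_pos i).ne', div_eq_inv_mul]
  exact (inv_mul_le_iff₀ hcard).mp hjensen

end Matrix

noncomputable def discountedGram {n : Type*} [Fintype n] [DecidableEq n] (γ c : ℝ)
    (a : ℕ → n → ℝ) (u : ℕ) : Matrix n n ℝ :=
  (∑ s ∈ Finset.Icc 1 u, γ ^ (u - s) • vecMulVec (a s) (a s)) + c • 1

namespace discountedGram

variable {n : Type*} [Fintype n] [DecidableEq n] {γ c : ℝ} {a : ℕ → n → ℝ}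

theorem zero : discountedGram γ c a 0 = c • 1 := by
  simp [discountedGram]

theorem succ (k : ℕ) : discountedGram γ c a (k + 1) =
    γ • discountedGram γ c a k + vecMulVec (a (k + 1)) (a (k + 1)) + (c * (1 - γ)) • 1 := by
  have hsum : ∑ s ∈ Finset.Icc 1 (k + 1), γ ^ (k + 1 - s) • vecMulVec (a s) (a s)
      = γ • ∑ s ∈ Finset.Icc 1 k, γ ^ (k - s) • vecMulVec (a s) (a s)
        + vecMulVec (a (k + 1)) (a (k + 1)) := by
    rw [Finset.sum_Icc_succ_top (Nat.le_add_left 1 k), Finset.smul_sum, Nat.sub_self, pow_zero,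
      one_smul]
    congr 1
    refine Finset.sum_congr rfl fun s hs => ?_
    rw [smul_smul, ← pow_succ', Nat.sub_add_comm (Finset.mem_Icc.mp hs).2]
  rw [discountedGram, discountedGram, hsum]
  module

theorem posDef (hγ : 0 ≤ γ) (hc : 0 < c) (u : ℕ) : (discountedGram γ c a u).PosDef :=
  PosDef.posSemidef_add
    (posSemidef_sum _ fun s _ => (posSemidef_vecMulVec_self (a s)).smul (pow_nonneg hγ _))
    (PosDef.one.smul hc)

theorem trace_le {B : ℝ} (hγ0 : 0 ≤ γ) (hγ1 : γ < 1) (hB : ∀ s, a s ⬝ᵥ a s ≤ B) (u : ℕ) :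
    trace (discountedGram γ c a u) ≤ B / (1 - γ) + c * Fintype.card n := by
  have h1γ : 0 < 1 - γ := by linarith
  induction u with
  | zero =>
    have hB0 : 0 ≤ B := (dotProduct_self_star_nonneg (a 0)).trans (hB 0)
    rw [zero, trace_smul, trace_one, smul_eq_mul]
    linarith [div_nonneg hB0 h1γ.le]
  | succ k ih =>
    rw [succ, trace_add, trace_add, trace_smul, trace_smul, trace_vecMulVec, trace_one,
      smul_eq_mul, smul_eq_mul]
    have hfixed : γ * (B / (1 - γ) + c * Fintype.card n) + B + c * (1 - γ) * Fintype.card n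
        = B / (1 - γ) + c * Fintype.card n := by field_simp; ring
    linarith [hB (k + 1), mul_le_mul_of_nonneg_left ih hγ0]

theorem le_det_succ (hγ : 0 < γ) (hγ1 : γ ≤ 1) (hc : 0 < c) (k : ℕ) :
    γ ^ Fintype.card n * det (discountedGram γ c a k) *
        (1 + γ⁻¹ * (a (k + 1) ⬝ᵥ (discountedGram γ c a k)⁻¹ *ᵥ a (k + 1)))
      ≤ det (discountedGram γ c a (k + 1)) := by
  set G := discountedGram γ c a k
  set v := a (k + 1)
  have hG : G.PosDef := posDef hγ.le hc k
  have hunit : IsUnit G.det := hG.det_pos.ne'.isUnit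
  have hinv : (γ • G)⁻¹ = γ⁻¹ • G⁻¹ :=
    inv_eq_left_inv (by simp [smul_smul, hγ.ne', nonsing_inv_mul G hunit])
  have hunitγ : IsUnit (γ • G).det := by
    rw [det_smul]
    exact (pow_pos hγ _).ne'.isUnit.mul hunit
  have hrank1 : det (γ • G + vecMulVec v v)
      = γ ^ Fintype.card n * det G * (1 + γ⁻¹ * (v ⬝ᵥ G⁻¹ *ᵥ v)) := by
    rw [det_add_vecMulVec hunitγ, hinv, det_smul, smul_mulVec, dotProduct_smul, smul_eq_mul]
  rw [← hrank1, succ]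
  exact ((hG.smul hγ).posSemidef.add (posSemidef_vecMulVec_self v)).det_le_det_add_smul_one
    (mul_nonneg hc.le (by linarith))

theorem min_one_le_log_det_succ_sub (hγ : 0 < γ) (hγ1 : γ ≤ 1) (hc : 0 < c) (k : ℕ) :
    min 1 (a (k + 1) ⬝ᵥ (discountedGram γ c a k)⁻¹ *ᵥ a (k + 1))
      ≤ 2 * (log (det (discountedGram γ c a (k + 1))) - log (det (discountedGram γ c a k))
        + Fintype.card n * log γ⁻¹) := by
  set x := a (k + 1) ⬝ᵥ (discountedGram γ c a k)⁻¹ *ᵥ a (k + 1)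
  have hG := posDef hγ.le hc (a := a) k
  have hdet := hG.det_pos
  have hx : 0 ≤ x := by simpa using hG.inv.posSemidef.dotProduct_mulVec_nonneg (a (k + 1))
  have hy : 0 ≤ γ⁻¹ * x := mul_nonneg (inv_nonneg.mpr hγ.le) hx
  have hlog : Fintype.card n * log γ + log (det (discountedGram γ c a k)) + log (1 + γ⁻¹ * x)
      ≤ log (det (discountedGram γ c a (k + 1))) := by
    rw [← log_pow, ← log_mul (by positivity) hdet.ne', ← log_mul (by positivity) (by positivity)]
    exact log_le_log (by positivity) (le_det_succ hγ hγ1 hc k)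
  calc min 1 x ≤ min 1 (γ⁻¹ * x) :=
        min_le_min_left 1 (le_mul_of_one_le_left hx ((one_le_inv₀ hγ).mpr hγ1))
    _ ≤ 2 * log (1 + γ⁻¹ * x) := Real.min_one_le_two_mul_log_one_add hy
    _ ≤ _ := by rw [log_inv]; linarith

theorem sum_min_one_le_log_det_sub (hγ : 0 < γ) (hγ1 : γ ≤ 1) (hc : 0 < c) (T : ℕ) :
    ∑ t ∈ Finset.Icc 1 T, min 1 (a t ⬝ᵥ (discountedGram γ c a (t - 1))⁻¹ *ᵥ a t)
      ≤ 2 * (log (det (discountedGram γ c a T)) - log (det (discountedGram γ c a 0))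
        + T * (Fintype.card n * log γ⁻¹)) := by
  induction T with
  | zero => simp
  | succ k ih =>
    rw [Finset.sum_Icc_succ_top (Nat.le_add_left 1 k), Nat.add_sub_cancel]
    have hstep := min_one_le_log_det_succ_sub (a := a) hγ hγ1 hc k
    push_cast
    linarith

theorem log_det_sub_log_det_zero_le [Nonempty n] {B : ℝ} (hγ0 : 0 ≤ γ) (hγ1 : γ < 1)
    (hc : 0 < c) (hB : ∀ s, a s ⬝ᵥ a s ≤ B) (T : ℕ) :
    log (det (discountedGram γ c a T)) - log (det (discountedGram γ c a 0))
      ≤ Fintype.card n * log (1 + B / (Fintype.card n * c * (1 - γ))) := by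
  have hcard : (0 : ℝ) < Fintype.card n := by exact_mod_cast Fintype.card_pos
  have h1γ : 0 < 1 - γ := by linarith
  have hB0 : 0 ≤ B := (dotProduct_self_star_nonneg (a 0)).trans (hB 0)
  have hG := posDef hγ0 hc (a := a) T
  have htrace : trace (discountedGram γ c a T) / Fintype.card n
      ≤ c * (1 + B / (Fintype.card n * c * (1 - γ))) := by
    rw [div_le_iff₀ hcard]
    calc _ ≤ B / (1 - γ) + c * Fintype.card n := trace_le hγ0 hγ1 hB T
      _ = _ := by field_simp; ring
  have hlogT : log (det (discountedGram γ c a T))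
      ≤ Fintype.card n * (log c + log (1 + B / (Fintype.card n * c * (1 - γ)))) := by
    rw [← log_mul hc.ne' (by positivity)]
    exact hG.log_det_le.trans
      (mul_le_mul_of_nonneg_left (log_le_log (div_pos hG.trace_pos hcard) htrace) hcard.le)
  have hlog0 : log (det (discountedGram γ c a 0)) = Fintype.card n * log c := by
    rw [zero, det_smul, det_one, mul_one, log_pow]
  rw [hlog0]
  linarith

theorem sum_min_one_le [Nonempty n] {B : ℝ} (hγ : 0 < γ) (hγ1 : γ < 1) (hc : 0 < c)
    (hB : ∀ s, a s ⬝ᵥ a s ≤ B) (T : ℕ) :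
    ∑ t ∈ Finset.Icc 1 T, min 1 (a t ⬝ᵥ (discountedGram γ c a (t - 1))⁻¹ *ᵥ a t)
      ≤ 2 * Fintype.card n * (T * log γ⁻¹ + log (1 + B / (Fintype.card n * c * (1 - γ)))) := by
  have hsum := sum_min_one_le_log_det_sub (a := a) hγ hγ1.le hc T
  have hlog := log_det_sub_log_det_zero_le hγ.le hγ1 hc hB T
  linarith

end discountedGram

theorem elliptical_potential_discounted_general
    (d T : ℕ) (hd : 0 < d) (A : ℕ → (Fin d → ℝ)) (γ lam cμ L : ℝ)
    (hγ : 0 < γ) (hγ1 : γ < 1) (hlam : 0 < lam) (hcμ : 0 < cμ)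
    (hA : ∀ t, Real.sqrt (A t ⬝ᵥ A t) ≤ L)
    (W : ℕ → Matrix (Fin d) (Fin d) ℝ)
    (hW : ∀ u, W u = (∑ s ∈ Finset.Icc 1 u, γ ^ (u - s) • vecMulVec (A s) (A s))
      + (lam / cμ) • (1 : Matrix (Fin d) (Fin d) ℝ)) :
    ∑ t ∈ Finset.Icc 1 T, min 1 (A t ⬝ᵥ (W (t - 1))⁻¹.mulVec (A t))
      ≤ 2 * d * ((T : ℝ) * Real.log (1 / γ)
        + Real.log (1 + cμ * L ^ 2 / (d * lam * (1 - γ)))) := by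
  have hWG : W = discountedGram γ (lam / cμ) A := funext hW
  have hAL : ∀ t, A t ⬝ᵥ A t ≤ L ^ 2 := fun t => (sqrt_le_iff.mp (hA t)).2
  have : Nonempty (Fin d) := ⟨⟨0, hd⟩⟩
  have hbound := discountedGram.sum_min_one_le hγ hγ1 (div_pos hlam hcμ) hAL T
  have hconst : L ^ 2 / (d * (lam / cμ) * (1 - γ)) = cμ * L ^ 2 / (d * lam * (1 - γ)) := by
    field_simp
  rw [Fintype.card_fin, hconst, ← one_div] at hbound
  rwa [hWG]

/-- Elliptical potential lemma, discounted version. -/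
theorem elliptical_potential_discounted
    (d T : ℕ) (hd : 0 < d) (A : ℕ → (Fin d → ℝ)) (γ lam cμ L : ℝ)
    (hγ : 0 < γ) (hγ1 : γ < 1) (hlam : 0 < lam) (hcμ : 0 < cμ) (hL : 0 < L)
    (hA : ∀ t, Real.sqrt (A t ⬝ᵥ A t) ≤ L)
    (W : ℕ → Matrix (Fin d) (Fin d) ℝ)
    (hW : ∀ u, W u = (∑ s ∈ Finset.Icc 1 u, γ ^ (u - s) • vecMulVec (A s) (A s))
      + (lam / cμ) • (1 : Matrix (Fin d) (Fin d) ℝ)) :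
    ∑ t ∈ Finset.Icc 1 T, min 1 (A t ⬝ᵥ (W (t - 1))⁻¹.mulVec (A t))
      ≤ 2 * d * ((T : ℝ) * Real.log (1 / γ)
        + Real.log (1 + cμ * L ^ 2 / (d * lam * (1 - γ)))) :=
  elliptical_potential_discounted_general d T hd A γ lam cμ L hγ hγ1 hlam hcμ hA W hW
end

section
/- Lipschitz link function transfer: if μ : ℝ → ℝ is k_μ-Lipschitz, G is positive definite with G ⪰ c_μ V for a positive definite V and c_μ > 0, and g(θ₁) - g(θ₂) = G(θ₁ - θ₂), then for any vector a: |μ(a^⊤ θ₁) - μ(a^⊤ θ₂)| ≤ (k_μ / c_μ) ‖a‖_{V^{-1}} ‖g(θ₁) - g(θ₂)‖_{V^{-1}}. -/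
open Real Matrix

/-!
Write `u = θ₁ - θ₂`, so that `g θ₁ - g θ₂ = G u`. Cauchy–Schwarz for the dual pair of norms
`‖·‖_{V⁻¹}`, `‖·‖_V` gives `|aᵀu| ≤ ‖a‖_{V⁻¹} ‖u‖_V` and `uᵀGu ≤ ‖Gu‖_{V⁻¹} ‖u‖_V`, while
`G ⪰ c V` gives `c ‖u‖_V² ≤ uᵀGu`. Hence `c ‖u‖_V ≤ ‖Gu‖_{V⁻¹}`, and the Lipschitz bound on the
link function finishes the proof.
-/

namespace Matrix

variable {n : Type*} [Fintype n] [DecidableEq n]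

theorem PosSemidef.dotProduct_mulVec_sq_le {M : Matrix n n ℝ} (hM : M.PosSemidef) (x y : n → ℝ) :
    (x ⬝ᵥ M *ᵥ y) ^ 2 ≤ (x ⬝ᵥ M *ᵥ x) * (y ⬝ᵥ M *ᵥ y) := by
  have hsymm : (x ⬝ᵥ M *ᵥ y) = y ⬝ᵥ M *ᵥ x := by
    rw [dotProduct_mulVec, ← mulVec_transpose, ← conjTranspose_eq_transpose_of_trivial,
      hM.isHermitian.eq, dotProduct_comm]
  have hnonneg : ∀ v, 0 ≤ toBilin' M v v := fun v => by
    simpa [toBilin'_apply'] using hM.dotProduct_mulVec_nonneg v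
  simpa [toBilin'_apply', sq, ← hsymm] using
    (toBilin' M).apply_mul_apply_le_of_forall_zero_le hnonneg x y

theorem PosDef.abs_dotProduct_le {M : Matrix n n ℝ} (hM : M.PosDef) (x y : n → ℝ) :
    |x ⬝ᵥ y| ≤ √(x ⬝ᵥ M⁻¹ *ᵥ x) * √(y ⬝ᵥ M *ᵥ y) := by
  have hdet : IsUnit M.det := (isUnit_iff_isUnit_det M).mp hM.isUnit
  have hinv : M⁻¹ *ᵥ (M *ᵥ y) = y := by
    rw [mulVec_mulVec, nonsing_inv_mul M hdet, one_mulVec]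
  have hsq := hM.inv.posSemidef.dotProduct_mulVec_sq_le x (M *ᵥ y)
  rw [hinv, dotProduct_comm (M *ᵥ y)] at hsq
  have hx : 0 ≤ x ⬝ᵥ M⁻¹ *ᵥ x := by simpa using hM.inv.posSemidef.dotProduct_mulVec_nonneg x
  rw [← sqrt_mul hx]
  exact abs_le_sqrt hsq

theorem sqrt_dotProduct_mulVec_le_of_posSemidef_sub {G V : Matrix n n ℝ} {c : ℝ}
    (hV : V.PosDef) (hGV : (G - c • V).PosSemidef) (u : n → ℝ) :
    c * √(u ⬝ᵥ V *ᵥ u) ≤ √((G *ᵥ u) ⬝ᵥ V⁻¹ *ᵥ (G *ᵥ u)) := by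
  set p := u ⬝ᵥ V *ᵥ u
  have hp : 0 ≤ p := hV.posSemidef.dotProduct_mulVec_nonneg u
  have hcoer : c * p ≤ u ⬝ᵥ G *ᵥ u := by
    have := hGV.dotProduct_mulVec_nonneg u
    rw [star_trivial, sub_mulVec, dotProduct_sub, smul_mulVec, dotProduct_smul, smul_eq_mul] at this
    linarith
  have hcs : u ⬝ᵥ G *ᵥ u ≤ √((G *ᵥ u) ⬝ᵥ V⁻¹ *ᵥ (G *ᵥ u)) * √p := by
    rw [dotProduct_comm]
    exact (le_abs_self _).trans (hV.abs_dotProduct_le _ u)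
  rcases hp.eq_or_lt with hp0 | hp0
  · rw [← hp0, sqrt_zero, mul_zero]
    exact sqrt_nonneg _
  · have hsp : 0 < √p := sqrt_pos.mpr hp0
    refine le_of_mul_le_mul_right ?_ hsp
    rw [mul_assoc, mul_self_sqrt hp]
    exact hcoer.trans hcs

end Matrix

theorem lipschitz_link_transfer_general
    (d : ℕ) (μl : ℝ → ℝ) (kμ cμ : ℝ) (hkμ : 0 ≤ kμ) (hcμ : 0 < cμ)
    (hlip : ∀ x y : ℝ, |μl x - μl y| ≤ kμ * |x - y|)
    (g : (Fin d → ℝ) → (Fin d → ℝ))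
    (G V : Matrix (Fin d) (Fin d) ℝ) (hV : V.PosDef)
    (hGV : (G - cμ • V).PosSemidef)
    (θ₁ θ₂ : Fin d → ℝ)
    (hmv : g θ₁ - g θ₂ = G.mulVec (θ₁ - θ₂))
    (a : Fin d → ℝ) :
    |μl (a ⬝ᵥ θ₁) - μl (a ⬝ᵥ θ₂)|
      ≤ (kμ / cμ) * Real.sqrt (a ⬝ᵥ V⁻¹.mulVec a)
        * Real.sqrt ((g θ₁ - g θ₂) ⬝ᵥ V⁻¹.mulVec (g θ₁ - g θ₂)) := by
  have hlink : |μl (a ⬝ᵥ θ₁) - μl (a ⬝ᵥ θ₂)| ≤ kμ * |a ⬝ᵥ (θ₁ - θ₂)| := by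
    simpa only [dotProduct_sub] using hlip (a ⬝ᵥ θ₁) (a ⬝ᵥ θ₂)
  have hdual := hV.abs_dotProduct_le a (θ₁ - θ₂)
  have hcoer := sqrt_dotProduct_mulVec_le_of_posSemidef_sub hV hGV (θ₁ - θ₂)
  rw [← hmv] at hcoer
  calc |μl (a ⬝ᵥ θ₁) - μl (a ⬝ᵥ θ₂)|
      ≤ kμ * |a ⬝ᵥ (θ₁ - θ₂)| := hlink
    _ ≤ kμ * (√(a ⬝ᵥ V⁻¹ *ᵥ a) * √((θ₁ - θ₂) ⬝ᵥ V *ᵥ (θ₁ - θ₂))) := by gcongr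
    _ ≤ kμ * (√(a ⬝ᵥ V⁻¹ *ᵥ a) * (√((g θ₁ - g θ₂) ⬝ᵥ V⁻¹ *ᵥ (g θ₁ - g θ₂)) / cμ)) := by
        gcongr
        rwa [le_div_iff₀ hcμ, mul_comm]
    _ = _ := by ring

/-- Lipschitz link function transfer:
`|μ(a^⊤θ₁) - μ(a^⊤θ₂)| ≤ (k_μ/c_μ) ‖a‖_{V⁻¹} ‖g(θ₁)-g(θ₂)‖_{V⁻¹}`. -/
theorem lipschitz_link_transfer
    (d : ℕ) (μl : ℝ → ℝ) (kμ cμ : ℝ) (hkμ : 0 ≤ kμ) (hcμ : 0 < cμ)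
    (hlip : ∀ x y : ℝ, |μl x - μl y| ≤ kμ * |x - y|)
    (g : (Fin d → ℝ) → (Fin d → ℝ))
    (G V : Matrix (Fin d) (Fin d) ℝ) (hG : G.PosDef) (hV : V.PosDef)
    (hGV : (G - cμ • V).PosSemidef)
    (θ₁ θ₂ : Fin d → ℝ)
    (hmv : g θ₁ - g θ₂ = G.mulVec (θ₁ - θ₂))
    (a : Fin d → ℝ) :
    |μl (a ⬝ᵥ θ₁) - μl (a ⬝ᵥ θ₂)|
      ≤ (kμ / cμ) * Real.sqrt (a ⬝ᵥ V⁻¹.mulVec a)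
        * Real.sqrt ((g θ₁ - g θ₂) ⬝ᵥ V⁻¹.mulVec (g θ₁ - g θ₂)) :=
  lipschitz_link_transfer_general d μl kμ cμ hkμ hcμ hlip g G V hV hGV θ₁ θ₂ hmv a
end
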